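/- If X is a first-order differential operator and Y, Z are any differential operators, then X ∘ (Y ∘ Z) = (X ⋄ Y) ∘ Z, where ⋄ is operator composition and ∘ is the white multiplication. -/

import Mathlib

open Finsupp

/-- The space of linear differential operators in `n` variables (with polynomial
coefficients over `ℂ`): a formal finite sum `Σ_α u_α ∂^α`. -/
abbrev Diff (n : ℕ) := (Fin n →₀ ℕ) →₀ MvPolynomial (Fin n) ℂ

/-- The operator `∂^α = ∂₁^{α₁} ⋯ ∂ₙ^{αₙ}` acting on coefficient functions. -/
noncomputable def Dop {n : ℕ} (α : Fin n →₀ ℕ) :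
    Module.End ℂ (MvPolynomial (Fin n) ℂ) :=
  (List.ofFn fun i : Fin n => ((MvPolynomial.pderiv i).toLinearMap) ^ (α i)).prod

/-- White multiplication: `(u ∂^α) ∘ (v ∂^β) = u ∂^α(v) ∂^β`, extended bilinearly. -/
noncomputable def white {n : ℕ} (X Y : Diff n) : Diff n :=
  X.sum fun α u => Y.sum fun β v => Finsupp.single β (u * Dop α v)

/-- Black multiplication: `(u ∂^α) • (v ∂^β) = u v ∂^{α+β}`, extended bilinearly. -/
noncomputable def black {n : ℕ} (X Y : Diff n) : Diff n :=
  X.sum fun α u => Y.sum fun β v => Finsupp.single (α + β) (u * v)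

/-- Composition of differential operators:
`(u ∂^α) ⋄ (v ∂^β) = Σ_{γ ≤ α} binom(α,γ) u ∂^γ(v) ∂^{α+β-γ}`, extended bilinearly. -/
noncomputable def diam {n : ℕ} (X Y : Diff n) : Diff n :=
  X.sum fun α u => Y.sum fun β v =>
    ∑ γ ∈ Finset.Iic α,
      Finsupp.single (α + β - γ) (((∏ i, ((α i).choose (γ i)) : ℕ) : ℂ) • (u * Dop γ v))

/-- A differential operator is of first order (a vector field) if it has the
form `Σ_i u_i ∂_i`, i.e. every multi-index in its support has total degree 1. -/
def IsVect {n : ℕ} (X : Diff n) : Prop :=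
  ∀ α ∈ X.support, (α.sum fun _ k => k) = 1

/-- The identity differential operator `1·∂^0`. -/
noncomputable def unitD {n : ℕ} : Diff n := Finsupp.single 0 1

/-- Composition (`⋄`-)power `L^m = L ⋄ ⋯ ⋄ L`. -/
noncomputable def dpow {n : ℕ} (L : Diff n) : ℕ → Diff n
  | 0 => unitD
  | m + 1 => diam L (dpow L m)

/-- Black power `X^{•k} = X • ⋯ • X`. -/
noncomputable def bpow {n : ℕ} (X : Diff n) : ℕ → Diff n
  | 0 => unitD
  | k + 1 => black X (bpow X k)

/-!
Both sides are additive in each of `X`, `Y`, `Z`, so it suffices to take `X = u ∂ᵢ`, `Y = v ∂^β`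
and `Z = w ∂^δ`. Then `X ∘ (Y ∘ Z) = u ∂ᵢ(v ∂^β w) ∂^δ`, while `X ⋄ Y = u v ∂ᵢ∂^β + u ∂ᵢ(v) ∂^β`
gives `(X ⋄ Y) ∘ Z = (u v ∂ᵢ∂^β w + u ∂ᵢ(v) ∂^β w) ∂^δ`; the two agree by the Leibniz rule.
-/

namespace MvPolynomial

theorem pderiv_pderiv_comm {R σ : Type*} [CommSemiring R] (i j : σ) (p : MvPolynomial σ R) :
    pderiv i (pderiv j p) = pderiv j (pderiv i p) := by
  induction p using MvPolynomial.induction_on' with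
  | add p q hp hq => simp only [map_add, hp, hq]
  | monomial s a =>
    obtain rfl | hij := eq_or_ne i j
    · rfl
    classical
    simp only [pderiv_monomial, tsub_apply, single_eq_of_ne' hij, single_eq_of_ne' hij.symm,
      tsub_zero]
    rw [tsub_right_comm, mul_right_comm]

theorem commute_pderiv {R σ : Type*} [CommSemiring R] (i j : σ) :
    Commute ((pderiv i).toLinearMap : Module.End R (MvPolynomial σ R)) (pderiv j).toLinearMap :=
  LinearMap.ext (pderiv_pderiv_comm i j)

end MvPolynomial

theorem Finsupp.Iic_single_one {σ : Type*} [DecidableEq σ] (i : σ) :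
    Finset.Iic (single i 1) = {0, single i 1} := by
  ext γ
  simp only [Finset.mem_Iic, Finset.mem_insert, Finset.mem_singleton]
  constructor
  · intro h
    obtain ⟨k, rfl⟩ : ∃ k, γ = single i k :=
      support_subset_singleton'.mp ((support_mono h).trans support_single_subset)
    have : k ≤ 1 := by simpa using h i
    interval_cases k <;> simp
  · rintro (rfl | rfl)
    · exact zero_le
    · exact le_rfl

open MvPolynomial

variable {n : ℕ}

theorem Dop_eq_noncommProd (α : Fin n →₀ ℕ) :
    Dop α = Finset.univ.noncommProd
      (fun i => ((pderiv i).toLinearMap : Module.End ℂ (MvPolynomial (Fin n) ℂ)) ^ α i)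
      (fun i _ j _ _ => (commute_pderiv i j).pow_pow _ _) := by
  simp only [Dop, Finset.noncommProd, Fin.univ_val_map, Multiset.noncommProd_coe]

theorem Dop_zero : Dop (0 : Fin n →₀ ℕ) = 1 := by
  simp [Dop]

theorem Dop_add (α β : Fin n →₀ ℕ) : Dop (α + β) = Dop α * Dop β := by
  rw [Dop_eq_noncommProd, Dop_eq_noncommProd, Dop_eq_noncommProd]
  refine (Finset.noncommProd_congr rfl (fun i _ => pow_add _ _ _) _).trans ?_
  exact Finset.noncommProd_mul_distrib _ _ _ _ fun i _ j _ _ => (commute_pderiv i j).pow_pow _ _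

theorem Dop_single_one (i : Fin n) : Dop (single i 1) = (pderiv i).toLinearMap := by
  rw [Dop_eq_noncommProd]
  refine (Finset.noncommProd_erase_mul _ (Finset.mem_univ i) _ _).symm.trans ?_
  have hrest : ∀ j ∈ Finset.univ.erase i,
      ((pderiv j).toLinearMap : Module.End ℂ (MvPolynomial (Fin n) ℂ)) ^ single i 1 j = 1 :=
    fun j hj => by rw [single_eq_of_ne (Finset.ne_of_mem_erase hj), pow_zero]
  refine (congrArg (· * _) (Finset.noncommProd_eq_pow_card _ _ _ 1 hrest)).trans ?_
  simp

theorem white_zero_left (Y : Diff n) : white 0 Y = 0 := by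
  simp [white]

theorem white_zero_right (X : Diff n) : white X 0 = 0 := by
  simp [white]

theorem white_add_left (X X' Y : Diff n) : white (X + X') Y = white X Y + white X' Y := by
  refine sum_add_index' (fun _ => by simp) fun α u u' => ?_
  rw [← sum_add]
  exact sum_congr fun β _ => by rw [add_mul, single_add]

theorem white_add_right (X Y Y' : Diff n) : white X (Y + Y') = white X Y + white X Y' := by
  unfold white
  rw [← sum_add]
  refine sum_congr fun α _ => ?_
  rw [sum_add_index' (fun _ => by simp) (fun β v v' => by rw [map_add, mul_add, single_add])]

theorem white_single_single (α β : Fin n →₀ ℕ) (u v : MvPolynomial (Fin n) ℂ) :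
    white (single α u) (single β v) = single β (u * Dop α v) := by
  rw [white, sum_single_index (by simp), sum_single_index (by simp)]

theorem white_eq_sum_single_left (X Y : Diff n) :
    white X Y = X.sum fun α u => white (single α u) Y :=
  sum_congr fun α _ => by rw [white, sum_single_index (by simp)]

noncomputable def whiteRight (Z : Diff n) : Diff n →+ Diff n where
  toFun X := white X Z
  map_zero' := white_zero_left Z
  map_add' X X' := white_add_left X X' Z

theorem diam_zero_right (X : Diff n) : diam X 0 = 0 := by
  simp [diam]

theorem diam_add_right (X Y Y' : Diff n) : diam X (Y + Y') = diam X Y + diam X Y' := by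
  unfold diam
  rw [← sum_add]
  refine sum_congr fun α _ => ?_
  refine sum_add_index' (fun _ => by simp) fun β v v' => ?_
  rw [← Finset.sum_add_distrib]
  exact Finset.sum_congr rfl fun γ _ => by rw [map_add, mul_add, smul_add, single_add]

theorem diam_eq_sum_single_left (X Y : Diff n) :
    diam X Y = X.sum fun α u => diam (single α u) Y :=
  sum_congr fun α _ => by rw [diam, sum_single_index (by simp)]

theorem diam_single_single_one (i : Fin n) (β : Fin n →₀ ℕ) (u v : MvPolynomial (Fin n) ℂ) :
    diam (single (single i 1) u) (single β v)
      = single (single i 1 + β) (u * v) + single β (u * pderiv i v) := by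
  rw [diam, sum_single_index (by simp), sum_single_index (by simp), Iic_single_one,
    Finset.sum_pair (fun h => one_ne_zero (single_eq_zero.mp h.symm))]
  simp [Dop_zero, Dop_single_one]

theorem white_white_eq_diam_white_of_single_one (i : Fin n) (u : MvPolynomial (Fin n) ℂ)
    (Y Z : Diff n) :
    white (single (single i 1) u) (white Y Z) = white (diam (single (single i 1) u) Y) Z := by
  induction Y using induction_linear with
  | zero => rw [white_zero_left, white_zero_right, diam_zero_right, white_zero_left]
  | add Y Y' hY hY' => rw [white_add_left, white_add_right, hY, hY', diam_add_right, white_add_left]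
  | single β v =>
    induction Z using induction_linear with
    | zero => simp only [white_zero_right]
    | add Z Z' hZ hZ' => rw [white_add_right, white_add_right, hZ, hZ', white_add_right]
    | single δ w =>
      have hDop : Dop (single i 1 + β) w = pderiv i (Dop β w) := by
        rw [Dop_add, Dop_single_one]; rfl
      rw [white_single_single, white_single_single, diam_single_single_one, white_add_left,
        white_single_single, white_single_single, ← single_add, Dop_single_one, hDop]
      congr 1
      simp only [Derivation.coeFn_coe, pderiv_mul]
      ring

/-- for a vector field `X` and any operators `Y, Z`,
`X ∘ (Y ∘ Z) = (X ⋄ Y) ∘ Z`. -/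
theorem white_white_eq_diam_white {n : ℕ} (X Y Z : Diff n) (hX : IsVect X) :
    white X (white Y Z) = white (diam X Y) Z := by
  rw [white_eq_sum_single_left, diam_eq_sum_single_left]
  refine (sum_congr fun α hα => ?_).trans (map_finsuppSum (whiteRight Z) X _).symm
  obtain ⟨i, rfl⟩ := (sum_eq_one_iff α).mp (hX α hα)
  exact white_white_eq_diam_white_of_single_one i _ Y Z
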